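/- Let G be a finite simple graph with maximum degree Δ ≥ 3 satisfying Z(G) = (Δ − 2)·β(G) + 1, and let G' be any graph obtained from G by a (Δ − 1)-leaf support vertex addition. Then G' has maximum degree Δ and Z(G') = (Δ − 2)·β(G') + 1. -/

import Mathlib

open SimpleGraph

namespace ZFPaper

variable {V : Type*} {W : Type*}

/-- The degree of a vertex, as the cardinality of its neighbor set. -/
noncomputable def degSet (G : SimpleGraph V) (v : V) : ℕ := (G.neighborSet v).ncard

/-- The maximum degree of a graph. -/
noncomputable def maxDeg (G : SimpleGraph V) : ℕ := sSup {d : ℕ | ∃ v, degSet G v = d}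

/-- The minimum degree of a graph. -/
noncomputable def minDeg (G : SimpleGraph V) : ℕ := sInf {d : ℕ | ∃ v, degSet G v = d}

/-- A set of vertices is a vertex cover if every edge has an endpoint in it. -/
def IsVC (G : SimpleGraph V) (C : Set V) : Prop :=
  ∀ ⦃u w : V⦄, G.Adj u w → u ∈ C ∨ w ∈ C

/-- The vertex cover number β(G). -/
noncomputable def vcNum (G : SimpleGraph V) : ℕ :=
  sInf {m : ℕ | ∃ C : Set V, IsVC G C ∧ C.ncard = m}

/-- A set of vertices is independent if its vertices are pairwise non-adjacent. -/
def IsIndep (G : SimpleGraph V) (S : Set V) : Prop :=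
  ∀ ⦃u : V⦄, u ∈ S → ∀ ⦃w : V⦄, w ∈ S → ¬ G.Adj u w

/-- The independence number α(G). -/
noncomputable def indepNum (G : SimpleGraph V) : ℕ :=
  sSup {m : ℕ | ∃ S : Set V, IsIndep G S ∧ S.ncard = m}

/-- `Forced G B v` means that, starting from the blue set `B`, the vertex `v` is
eventually colored blue by the zero forcing process: a blue vertex with a unique
white neighbor forces that neighbor to become blue. -/
inductive Forced (G : SimpleGraph V) (B : Set V) : V → Prop
  | init : ∀ v ∈ B, Forced G B v
  | force : ∀ u w : V, Forced G B u → G.Adj u w →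
      (∀ x : V, G.Adj u x → x ≠ w → Forced G B x) → Forced G B w

/-- A zero forcing set: iterating the forcing process colors every vertex blue. -/
def IsZFS (G : SimpleGraph V) (B : Set V) : Prop := ∀ v : V, Forced G B v

/-- The zero forcing number Z(G). -/
noncomputable def zfNum (G : SimpleGraph V) : ℕ :=
  sInf {m : ℕ | ∃ B : Set V, IsZFS G B ∧ B.ncard = m}

/-- A graph is claw-free if it has no induced `K_{1,3}`. -/
def ClawFree (G : SimpleGraph V) : Prop :=
  ¬ ∃ (v a b c : V), G.Adj v a ∧ G.Adj v b ∧ G.Adj v c ∧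
      a ≠ b ∧ a ≠ c ∧ b ≠ c ∧ ¬ G.Adj a b ∧ ¬ G.Adj a c ∧ ¬ G.Adj b c

/-- The join `G ∨ H` of two graphs: disjoint union plus all edges between the parts. -/
def joinG (G : SimpleGraph V) (H : SimpleGraph W) : SimpleGraph (V ⊕ W) where
  Adj a b :=
    (∃ u v, a = Sum.inl u ∧ b = Sum.inl v ∧ G.Adj u v) ∨
    (∃ u v, a = Sum.inr u ∧ b = Sum.inr v ∧ H.Adj u v) ∨
    (∃ u v, a = Sum.inl u ∧ b = Sum.inr v) ∨
    (∃ u v, a = Sum.inr u ∧ b = Sum.inl v)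
  symm := by
    constructor
    rintro a b (⟨u, v, rfl, rfl, h⟩ | ⟨u, v, rfl, rfl, h⟩ | ⟨u, v, rfl, rfl⟩ | ⟨u, v, rfl, rfl⟩)
    · exact Or.inl ⟨v, u, rfl, rfl, h.symm⟩
    · exact Or.inr (Or.inl ⟨v, u, rfl, rfl, h.symm⟩)
    · exact Or.inr (Or.inr (Or.inr ⟨v, u, rfl, rfl⟩))
    · exact Or.inr (Or.inr (Or.inl ⟨v, u, rfl, rfl⟩))
  loopless := by
    constructor
    rintro a (⟨u, v, rfl, h, hadj⟩ | ⟨u, v, rfl, h, hadj⟩ | ⟨u, v, rfl, h⟩ | ⟨u, v, rfl, h⟩) <;>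
      simp_all

/-- The graph obtained from `G` by a `k`-leaf support vertex addition at `v`:
a new support vertex `w = Sum.inr none` is attached to `v`, and `k` new leaves
`Sum.inr (some i)` are attached to `w`. -/
def lsva (G : SimpleGraph V) (v : V) (k : ℕ) : SimpleGraph (V ⊕ Option (Fin k)) where
  Adj a b :=
    (∃ x y, a = Sum.inl x ∧ b = Sum.inl y ∧ G.Adj x y) ∨
    (a = Sum.inl v ∧ b = Sum.inr none) ∨
    (a = Sum.inr none ∧ b = Sum.inl v) ∨
    (∃ i : Fin k, a = Sum.inr none ∧ b = Sum.inr (some i)) ∨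
    (∃ i : Fin k, a = Sum.inr (some i) ∧ b = Sum.inr none)
  symm := by
    constructor
    rintro a b (⟨x, y, rfl, rfl, h⟩ | ⟨rfl, rfl⟩ | ⟨rfl, rfl⟩ | ⟨i, rfl, rfl⟩ | ⟨i, rfl, rfl⟩)
    · exact Or.inl ⟨y, x, rfl, rfl, h.symm⟩
    · exact Or.inr (Or.inr (Or.inl ⟨rfl, rfl⟩))
    · exact Or.inr (Or.inl ⟨rfl, rfl⟩)
    · exact Or.inr (Or.inr (Or.inr (Or.inr ⟨i, rfl, rfl⟩)))
    · exact Or.inr (Or.inr (Or.inr (Or.inl ⟨i, rfl, rfl⟩)))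
  loopless := by
    constructor
    rintro a (⟨x, y, rfl, h, hadj⟩ | ⟨rfl, h⟩ | ⟨rfl, h⟩ | ⟨i, rfl, h⟩ | ⟨i, rfl, h⟩) <;> simp_all

/-- `LSVAChain m G H` means `H` is obtained from `G` by a finite sequence of
`m`-leaf support vertex additions (each applied at a vertex of degree at most `m-1`). -/
inductive LSVAChain (m : ℕ) : {α : Type} → SimpleGraph α → {β : Type} → SimpleGraph β → Prop
  | refl {α : Type} (G : SimpleGraph α) : LSVAChain m G G
  | step {α : Type} {G : SimpleGraph α} {β : Type} {H : SimpleGraph β} (v : β)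
      (hv : (H.neighborSet v).ncard ≤ m - 1) :
      LSVAChain m G H → LSVAChain m G (lsva H v m)

/-- The graph obtained from the complete graph `K_n` by attaching one pendant
vertex to each vertex in the set `A`. -/
def pendantKn (n : ℕ) (A : Finset (Fin n)) : SimpleGraph (Fin n ⊕ {a : Fin n // a ∈ A}) where
  Adj a b :=
    (∃ x y : Fin n, a = Sum.inl x ∧ b = Sum.inl y ∧ x ≠ y) ∨
    (∃ p : {a : Fin n // a ∈ A}, a = Sum.inl p.1 ∧ b = Sum.inr p) ∨
    (∃ p : {a : Fin n // a ∈ A}, a = Sum.inr p ∧ b = Sum.inl p.1)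
  symm := by
    constructor
    rintro a b (⟨x, y, rfl, rfl, h⟩ | ⟨p, rfl, rfl⟩ | ⟨p, rfl, rfl⟩)
    · exact Or.inl ⟨y, x, rfl, rfl, h.symm⟩
    · exact Or.inr (Or.inr ⟨p, rfl, rfl⟩)
    · exact Or.inr (Or.inl ⟨p, rfl, rfl⟩)
  loopless := by
    constructor
    rintro a (⟨x, y, rfl, h, hne⟩ | ⟨p, rfl, h⟩ | ⟨p, rfl, h⟩) <;> simp_all

/-- The graph obtained from a cycle `C_k` with vertices `v_1, …, v_k` (the `Sum.inl`
vertices) together with disjoint complete graphs `K_{n i}` (the `Sum.inr` vertices),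
where every vertex of the `i`-th complete graph is joined to both `v_i` and `v_{i+1}`
(indices mod `k`). -/
def cycleCliques (k : ℕ) (n : Fin k → ℕ) :
    SimpleGraph (Fin k ⊕ Σ i : Fin k, Fin (n i)) where
  Adj a b :=
    match a, b with
    | Sum.inl i, Sum.inl j =>
        i ≠ j ∧ ((j : ℕ) = ((i : ℕ) + 1) % k ∨ (i : ℕ) = ((j : ℕ) + 1) % k)
    | Sum.inl j, Sum.inr s => (j : ℕ) = (s.1 : ℕ) ∨ (j : ℕ) = ((s.1 : ℕ) + 1) % k
    | Sum.inr s, Sum.inl j => (j : ℕ) = (s.1 : ℕ) ∨ (j : ℕ) = ((s.1 : ℕ) + 1) % k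
    | Sum.inr s, Sum.inr t => s ≠ t ∧ s.1 = t.1
  symm := by
    constructor
    rintro (i | s) (j | t) h
    · exact ⟨Ne.symm h.1, h.2.symm⟩
    · exact h
    · exact h
    · exact ⟨Ne.symm h.1, h.2.symm⟩
  loopless := by
    constructor
    rintro (i | s) h
    · exact h.1 rfl
    · exact h.1 rfl

/-! Attaching a support vertex `w` with `k ≥ 2` leaves raises β by one (`w` covers the new star,
which needs a vertex of its own) and Z by `k - 1`; since `w` gets degree `k + 1 = Δ`, the identity
`Z = (Δ - 2) β + 1` is preserved. -/

lemma ncard_eq_ncard_preimage_inl_add_ncard_preimage_inr {α β : Type*} [Finite α]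
    [Finite β] (s : Set (α ⊕ β)) :
    s.ncard = (Sum.inl ⁻¹' s).ncard + (Sum.inr ⁻¹' s).ncard := by
  conv_lhs => rw [← Set.image_preimage_inl_union_image_preimage_inr s]
  rw [Set.ncard_union_eq Set.disjoint_image_inl_image_inr,
    Set.ncard_image_of_injective _ Sum.inl_injective,
    Set.ncard_image_of_injective _ Sum.inr_injective]

section Invariants

variable {G : SimpleGraph V}

variable (G) in
lemma degSet_le_maxDeg [Finite V] (u : V) : degSet G u ≤ maxDeg G :=
  le_csSup ⟨Nat.card V, by rintro _ ⟨u, rfl⟩; exact Set.ncard_le_card _⟩ ⟨u, rfl⟩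

lemma maxDeg_le {n : ℕ} (h : ∀ u, degSet G u ≤ n) : maxDeg G ≤ n :=
  csSup_le' (by rintro _ ⟨u, rfl⟩; exact h u)

lemma vcNum_le {C : Set V} (hC : IsVC G C) : vcNum G ≤ C.ncard :=
  Nat.sInf_le ⟨C, hC, rfl⟩

lemma le_vcNum {n : ℕ} (h : ∀ C, IsVC G C → n ≤ C.ncard) : n ≤ vcNum G :=
  le_csInf ⟨_, Set.univ, fun _ _ _ => Or.inl trivial, rfl⟩ (by rintro _ ⟨C, hC, rfl⟩; exact h C hC)

variable (G) in
lemma exists_isVC_ncard_eq_vcNum : ∃ C, IsVC G C ∧ C.ncard = vcNum G :=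
  Nat.sInf_mem (s := {m | ∃ C, IsVC G C ∧ C.ncard = m})
    ⟨_, Set.univ, fun _ _ _ => Or.inl trivial, rfl⟩

lemma zfNum_le {B : Set V} (hB : IsZFS G B) : zfNum G ≤ B.ncard :=
  Nat.sInf_le ⟨B, hB, rfl⟩

lemma le_zfNum {n : ℕ} (h : ∀ B, IsZFS G B → n ≤ B.ncard) : n ≤ zfNum G :=
  le_csInf ⟨_, Set.univ, fun x => .init x trivial, rfl⟩ (by rintro _ ⟨B, hB, rfl⟩; exact h B hB)

variable (G) in
lemma exists_isZFS_ncard_eq_zfNum : ∃ B, IsZFS G B ∧ B.ncard = zfNum G :=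
  Nat.sInf_mem (s := {m | ∃ B, IsZFS G B ∧ B.ncard = m})
    ⟨_, Set.univ, fun x => .init x trivial, rfl⟩

lemma Forced.of_neighborSet_eq_singleton {B : Set V} {u w : V} (hu : Forced G B u)
    (h : G.neighborSet u = {w}) : Forced G B w :=
  .force u w hu (by simp [← mem_neighborSet, h]) fun x hx hxw => by
    simp [← mem_neighborSet, h] at hx; exact absurd hx hxw

/-- Each of two white twins blocks the only possible forces of the other. -/
lemma not_forced_of_twins {B : Set V} {a b : V} (hab : a ≠ b)
    (hN : G.neighborSet a = G.neighborSet b) (ha : a ∉ B) (hb : b ∉ B) : ¬ Forced G B a := by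
  suffices ∀ x, Forced G B x → x ≠ a ∧ x ≠ b from fun h => (this a h).1 rfl
  intro x hx
  induction hx with
  | init x hx => exact ⟨fun h => ha (h ▸ hx), fun h => hb (h ▸ hx)⟩
  | force u x _ hux _ _ ih =>
    have hN' : ∀ y, G.Adj a y ↔ G.Adj b y := fun y => by
      rw [← mem_neighborSet, hN, mem_neighborSet]
    constructor
    · rintro rfl
      exact (ih b ((hN' u).1 hux.symm).symm hab.symm).2 rfl
    · rintro rfl
      exact (ih a ((hN' u).2 hux.symm).symm hab).1 rfl

end Invariants

section Lsva

variable {G : SimpleGraph V} {v : V} {k : ℕ}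

@[simp] lemma lsva_adj_inl_inl {x y : V} :
    (lsva G v k).Adj (.inl x) (.inl y) ↔ G.Adj x y := by simp [lsva]

@[simp] lemma lsva_adj_inl_none {x : V} : (lsva G v k).Adj (.inl x) (.inr none) ↔ x = v := by
  simp [lsva]

@[simp] lemma lsva_adj_none_inl {x : V} : (lsva G v k).Adj (.inr none) (.inl x) ↔ x = v := by
  simp [lsva, eq_comm]

@[simp] lemma lsva_adj_none_some (i : Fin k) : (lsva G v k).Adj (.inr none) (.inr (some i)) := by
  simp [lsva]

@[simp] lemma lsva_adj_some_none (i : Fin k) : (lsva G v k).Adj (.inr (some i)) (.inr none) := by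
  simp [lsva]

@[simp] lemma not_lsva_adj_inl_some {x : V} {i : Fin k} :
    ¬ (lsva G v k).Adj (.inl x) (.inr (some i)) := by
  simp [lsva]

@[simp] lemma not_lsva_adj_some_inl {x : V} {i : Fin k} :
    ¬ (lsva G v k).Adj (.inr (some i)) (.inl x) := by
  simp [lsva]

@[simp] lemma not_lsva_adj_some_some {i j : Fin k} :
    ¬ (lsva G v k).Adj (.inr (some i)) (.inr (some j)) := by
  simp [lsva]

lemma neighborSet_lsva_inl_of_ne {u : V} (hu : u ≠ v) :
    (lsva G v k).neighborSet (.inl u) = .inl '' G.neighborSet u := by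
  ext (x | _ | i) <;> simp [hu]

lemma neighborSet_lsva_inl_self :
    (lsva G v k).neighborSet (.inl v) = insert (.inr none) (.inl '' G.neighborSet v) := by
  ext (x | _ | i) <;> simp

lemma neighborSet_lsva_none :
    (lsva G v k).neighborSet (.inr none) = insert (.inl v) (Set.range (.inr ∘ some)) := by
  ext (x | _ | i) <;> simp [eq_comm]

lemma neighborSet_lsva_some (i : Fin k) :
    (lsva G v k).neighborSet (.inr (some i)) = {.inr none} := by
  ext (x | _ | j) <;> simp

lemma degSet_lsva_inl_of_ne {u : V} (hu : u ≠ v) : degSet (lsva G v k) (.inl u) = degSet G u := by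
  rw [degSet, neighborSet_lsva_inl_of_ne hu, Set.ncard_image_of_injective _ Sum.inl_injective,
    degSet]

lemma degSet_lsva_none : degSet (lsva G v k) (.inr none) = k + 1 := by
  rw [degSet, neighborSet_lsva_none, Set.ncard_insert_of_notMem (by simp),
    Set.ncard_range_of_injective (Sum.inr_injective.comp (Option.some_injective _)),
    Nat.card_eq_fintype_card, Fintype.card_fin]

lemma degSet_lsva_some (i : Fin k) : degSet (lsva G v k) (.inr (some i)) = 1 := by
  rw [degSet, neighborSet_lsva_some, Set.ncard_singleton]

lemma forced_lsva_inl {B : Set V} {B' : Set (V ⊕ Option (Fin k))}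
    (hw : Forced (lsva G v k) B' (.inr none)) (hB : ∀ x ∈ B, .inl x ∈ B') {u : V}
    (hu : Forced G B u) : Forced (lsva G v k) B' (.inl u) := by
  induction hu with
  | init x hx => exact .init _ (hB x hx)
  | force x y _ hxy _ ihx ih =>
    refine .force _ _ ihx (by simpa using hxy) ?_
    rintro (z | _ | i) hz hzy
    · exact ih z (by simpa using hz) (by simpa using hzy)
    · exact hw
    · simp at hz

/-- With `T` containing the blue vertices of `G`, a force by the support vertex `w` is simulated
in `G` either by `v ∈ T`, or by the fact that a white leaf can only be forced by `w` once `v` is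
blue. -/
lemma forced_of_forced_lsva_inl {B' : Set (V ⊕ Option (Fin k))} {T : Set V}
    (hT : Sum.inl ⁻¹' B' ⊆ T) (hv : v ∈ T ∨ ∃ l, .inr (some l) ∉ B') {u : V}
    (hu : Forced (lsva G v k) B' (.inl u)) : Forced G T u := by
  suffices ∀ x, Forced (lsva G v k) B' x →
      (∀ u, x = .inl u → Forced G T u) ∧
      (∀ l, x = .inr (some l) → .inr (some l) ∉ B' → Forced G T v) from
    (this _ hu).1 u rfl
  intro x hx
  induction hx with
  | init x hx =>
    refine ⟨?_, ?_⟩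
    · rintro u rfl
      exact .init u (hT hx)
    · rintro l rfl hl
      exact absurd hx hl
  | force a b _ hab _ iha ih =>
    refine ⟨?_, ?_⟩
    · rintro u rfl
      rcases a with a | _ | i
      · refine .force a u (iha.1 a rfl) (by simpa using hab) fun z hz hzu => ?_
        exact (ih (.inl z) (by simpa using hz) (by simpa using hzu)).1 z rfl
      · obtain rfl : u = v := by simpa using hab
        obtain hvT | ⟨l, hl⟩ := hv
        · exact .init u hvT
        · exact (ih (.inr (some l)) (by simp) (by simp)).2 l rfl hl
      · simp at hab
    · rintro l rfl -
      rcases a with a | _ | i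
      · simp at hab
      · exact (ih (.inl v) (by simp) (by simp)).1 v rfl
      · simp at hab

variable [Finite V]

lemma degSet_lsva_inl_self : degSet (lsva G v k) (.inl v) = degSet G v + 1 := by
  rw [degSet, neighborSet_lsva_inl_self, Set.ncard_insert_of_notMem (by simp),
    Set.ncard_image_of_injective _ Sum.inl_injective, degSet]

lemma degSet_le_degSet_lsva_inl (u : V) : degSet G u ≤ degSet (lsva G v k) (.inl u) := by
  obtain rfl | hu := eq_or_ne u v
  · simp [degSet_lsva_inl_self]
  · rw [degSet_lsva_inl_of_ne hu]

lemma maxDeg_lsva (hk : k + 1 ≤ maxDeg G) (hv : degSet G v < maxDeg G) :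
    maxDeg (lsva G v k) = maxDeg G := by
  refine le_antisymm (maxDeg_le ?_) (maxDeg_le fun u =>
    (degSet_le_degSet_lsva_inl u).trans (degSet_le_maxDeg _ _))
  rintro (u | _ | i)
  · obtain rfl | hu := eq_or_ne u v
    · rw [degSet_lsva_inl_self]; omega
    · rw [degSet_lsva_inl_of_ne hu]; exact degSet_le_maxDeg G u
  · rwa [degSet_lsva_none]
  · rw [degSet_lsva_some]; omega

lemma vcNum_lsva (hk : 0 < k) : vcNum (lsva G v k) = vcNum G + 1 := by
  refine le_antisymm ?_ (le_vcNum fun C' hC' => ?_)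
  · obtain ⟨C, hC, hCcard⟩ := exists_isVC_ncard_eq_vcNum G
    have hcover : IsVC (lsva G v k) (insert (.inr none) (.inl '' C)) := by
      rintro (x | _ | i) (y | _ | j) hxy <;> simp at hxy ⊢
      exact hC hxy
    calc vcNum (lsva G v k) ≤ _ := vcNum_le hcover
      _ = vcNum G + 1 := by
        rw [Set.ncard_insert_of_notMem (by simp),
          Set.ncard_image_of_injective _ Sum.inl_injective, hCcard]
  · have hG : IsVC G (Sum.inl ⁻¹' C') := fun x y hxy => hC' (by simpa using hxy)
    have hw : (Sum.inr ⁻¹' C').Nonempty := by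
      rcases hC' (lsva_adj_none_some (G := G) (v := v) ⟨0, hk⟩) with h | h
      exacts [⟨_, h⟩, ⟨_, h⟩]
    have := vcNum_le hG
    have := (Set.ncard_pos).2 hw
    rw [ncard_eq_ncard_preimage_inl_add_ncard_preimage_inr]
    omega

/-- Blue: the vertices of a minimum zero forcing set of `G` and all leaves but one; the other
leaves force `w`, which afterwards does not obstruct the forces of `G` and finally forces the
remaining leaf. -/
lemma zfNum_lsva_le (hk : 2 ≤ k) : zfNum (lsva G v k) ≤ zfNum G + (k - 1) := by
  obtain ⟨B, hB, hBcard⟩ := exists_isZFS_ncard_eq_zfNum G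
  let i₀ : Fin k := ⟨0, by omega⟩
  let i₁ : Fin k := ⟨1, by omega⟩
  set B' : Set (V ⊕ Option (Fin k)) := .inl '' B ∪ .inr '' (some '' {i₀}ᶜ)
  have hleaf : ∀ i ≠ i₀, Forced (lsva G v k) B' (.inr (some i)) :=
    fun i hi => .init _ (Or.inr ⟨_, ⟨i, hi, rfl⟩, rfl⟩)
  have hw : Forced (lsva G v k) B' (.inr none) :=
    (hleaf i₁ (by simp [i₀, i₁, Fin.ext_iff])).of_neighborSet_eq_singleton
      (neighborSet_lsva_some i₁)
  have hV : ∀ u, Forced (lsva G v k) B' (.inl u) :=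
    fun u => forced_lsva_inl hw (fun x hx => Or.inl ⟨x, hx, rfl⟩) (hB u)
  have hZFS : IsZFS (lsva G v k) B' := by
    rintro (u | _ | i)
    · exact hV u
    · exact hw
    · obtain rfl | hi := eq_or_ne i i₀
      · refine .force _ _ hw (by simp) ?_
        rintro (x | _ | j) hx hj
        · exact hV x
        · simp at hx
        · exact hleaf j (by simpa using hj)
      · exact hleaf i hi
  calc zfNum (lsva G v k) ≤ B'.ncard := zfNum_le hZFS
    _ = zfNum G + (k - 1) := by
      rw [Set.ncard_union_eq Set.disjoint_image_inl_image_inr,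
        Set.ncard_image_of_injective _ Sum.inl_injective,
        Set.ncard_image_of_injective _ Sum.inr_injective,
        Set.ncard_image_of_injective _ (Option.some_injective _), Set.ncard_compl,
        Set.ncard_singleton, Nat.card_eq_fintype_card, Fintype.card_fin, hBcard]

/-- Two white leaves would be twins, so at most one leaf is white. If all leaves are blue, the
blue vertices of `G` together with `v` form a zero forcing set of `G`; otherwise the blue
vertices of `G` already do. -/
lemma le_zfNum_lsva (hk : 0 < k) : zfNum G + (k - 1) ≤ zfNum (lsva G v k) := by
  refine le_zfNum fun B' hB' => ?_
  have hleaves : ∀ L : Set (Fin k), (∀ i ∈ L, .inr (some i) ∈ B') →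
      L.ncard ≤ (Sum.inr ⁻¹' B').ncard :=
    fun L hL => Set.ncard_le_ncard_of_injOn some hL (Option.some_injective _).injOn
  rw [ncard_eq_ncard_preimage_inl_add_ncard_preimage_inr]
  by_cases hall : ∀ l : Fin k, .inr (some l) ∈ B'
  · have hZ : zfNum G ≤ (insert v (Sum.inl ⁻¹' B')).ncard := zfNum_le fun u =>
      forced_of_forced_lsva_inl (Set.subset_insert _ _) (.inl (Set.mem_insert _ _)) (hB' _)
    have := Set.ncard_insert_le v (Sum.inl ⁻¹' B')
    have := hleaves Set.univ fun i _ => hall i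
    rw [Set.ncard_univ, Nat.card_eq_fintype_card, Fintype.card_fin] at this
    omega
  · obtain ⟨l, hl⟩ := not_forall.1 hall
    have hZ : zfNum G ≤ (Sum.inl ⁻¹' B').ncard := zfNum_le fun u =>
      forced_of_forced_lsva_inl subset_rfl (.inr ⟨l, hl⟩) (hB' _)
    have hothers : ∀ i ∈ ({l}ᶜ : Set (Fin k)), .inr (some i) ∈ B' := fun i hi => by
      by_contra hiB
      exact not_forced_of_twins (by simpa using hi)
        (by rw [neighborSet_lsva_some, neighborSet_lsva_some]) hiB hl (hB' _)
    have := hleaves _ hothers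
    rw [Set.ncard_compl, Set.ncard_singleton, Nat.card_eq_fintype_card, Fintype.card_fin] at this
    omega

lemma zfNum_lsva (hk : 2 ≤ k) : zfNum (lsva G v k) = zfNum G + (k - 1) :=
  (zfNum_lsva_le hk).antisymm (le_zfNum_lsva (by omega))

end Lsva

/-- If `Δ(G) ≥ 3`, `Z(G) = (Δ - 2)·β(G) + 1`, and `G'` is obtained from `G`
by a `(Δ - 1)`-leaf support vertex addition, then `Δ(G') = Δ(G)` and
`Z(G') = (Δ(G') - 2)·β(G') + 1`. -/
theorem stmt7 {V : Type*} [Fintype V] (G : SimpleGraph V)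
    (hdelta : 3 ≤ maxDeg G)
    (hZ : zfNum G = (maxDeg G - 2) * vcNum G + 1)
    (v : V) (hv : degSet G v ≤ (maxDeg G - 1) - 1) :
    maxDeg (lsva G v (maxDeg G - 1)) = maxDeg G ∧
    zfNum (lsva G v (maxDeg G - 1)) =
      (maxDeg (lsva G v (maxDeg G - 1)) - 2) * vcNum (lsva G v (maxDeg G - 1)) + 1 := by
  have hmax : maxDeg (lsva G v (maxDeg G - 1)) = maxDeg G := maxDeg_lsva (by omega) (by omega)
  refine ⟨hmax, ?_⟩
  rw [zfNum_lsva (by omega), hmax, vcNum_lsva (by omega), hZ, Nat.mul_succ]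
  omega

end ZFPaper
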